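/- arXiv:math/0611287 — 7 statements merged into one kernel-verified Lean document; each statement's English description precedes it below -/
import Mathlib

section
/- If φ : A → B is a 3-homomorphism between algebras (a linear map satisfying φ(abc) = φ(a)φ(b)φ(c) for all a, b, c ∈ A) and A is unital with unit 1, then the map ψ : A → B defined by ψ(a) = φ(1)·φ(a) is an algebra homomorphism (i.e., ψ is linear and multiplicative). -/
/-- If `φ : A → B` is a 3-homomorphism between algebras over ℂ, with `A`
unital, then `ψ(a) = φ(1) * φ(a)` is an algebra homomorphism (linear and multiplicative;
linearity is automatic since `ψ` is `φ` followed by a linear map). -/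
theorem stmt0 {A B : Type*} [Ring A] [Algebra ℂ A]
    [NonUnitalRing B] [Module ℂ B] [SMulCommClass ℂ B B] [IsScalarTower ℂ B B]
    (φ : A →ₗ[ℂ] B)
    (h3 : ∀ a b c : A, φ (a * b * c) = φ a * φ b * φ c) :
    ∃ ψ : A →ₗ[ℂ] B, (∀ a : A, ψ a = φ 1 * φ a) ∧
      ∀ a b : A, ψ (a * b) = ψ a * ψ b := by
  refine ⟨(LinearMap.mulLeft ℂ (φ 1)).comp φ, fun a => rfl, fun a b => ?_⟩
  show φ 1 * φ (a * b) = (φ 1 * φ a) * (φ 1 * φ b)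
  have h1 : φ (a * b) = φ a * φ 1 * φ b := by
    have := h3 a 1 b; rwa [mul_one] at this
  rw [h1]; noncomm_ring
end

section
/- Let φ : A → ℂ be a nonzero 3-homomorphism from a unital algebra A to ℂ. Then φ(1) = 1 or φ(1) = -1, and consequently either φ or -φ is a character (a multiplicative linear functional) on A. -/
/-- A nonzero 3-homomorphism `φ : A → ℂ` on a unital algebra satisfies
`φ(1) = 1` or `φ(1) = -1`, and either `φ` or `-φ` is multiplicative (a character). -/
theorem stmt3 {A : Type*} [Ring A] [Algebra ℂ A]
    (φ : A →ₗ[ℂ] ℂ) (h3 : ∀ a b c : A, φ (a * b * c) = φ a * φ b * φ c)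
    (hne : φ ≠ 0) :
    (φ 1 = 1 ∨ φ 1 = -1) ∧
      ((∀ a b : A, φ (a * b) = φ a * φ b) ∨
        (∀ a b : A, (-φ) (a * b) = (-φ) a * (-φ) b)) := by
  have h1 : φ 1 = φ 1 * φ 1 * φ 1 := by
    have := h3 1 1 1
    simpa using this
  have hnz : φ 1 ≠ 0 := by
    intro h0
    apply hne
    ext a
    have := h3 a 1 1
    rw [mul_one, mul_one, h0] at this
    simpa using this
  have hsq : φ 1 * φ 1 = 1 := by
    have h : φ 1 * (φ 1 * φ 1 - 1) = 0 := by linear_combination -h1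
    rcases mul_eq_zero.mp h with h' | h'
    · exact absurd h' hnz
    · exact sub_eq_zero.mp h'
  have hcases : φ 1 = 1 ∨ φ 1 = -1 := by
    have h : (φ 1 - 1) * (φ 1 + 1) = 0 := by linear_combination hsq
    rcases mul_eq_zero.mp h with h' | h'
    · exact Or.inl (by exact sub_eq_zero.mp h')
    · exact Or.inr (by linear_combination h')
  refine ⟨hcases, ?_⟩
  rcases hcases with h | h
  · left
    intro a b
    have := h3 a b 1
    rw [mul_one, h, mul_one] at this
    exact this
  · right
    intro a b
    have := h3 a b 1
    rw [mul_one, h] at this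
    simp only [LinearMap.neg_apply]
    rw [this]; ring
end

section
/- Let φ : A → B be a star-preserving 3-homomorphism between unital C*-algebras. Then for every a ∈ A, the spectrum of φ(a)*φ(a) is contained in σ(a*a) ∪ {0}. -/
/-- For a star-preserving 3-homomorphism `φ` between unital C*-algebras,
`σ(φ(a)* φ(a)) ⊆ σ(a* a) ∪ {0}` for every `a`. -/
theorem stmt4 {A B : Type*} [CStarAlgebra A] [CStarAlgebra B]
    (φ : A →ₗ[ℂ] B)
    (h3 : ∀ x y z : A, φ (x * y * z) = φ x * φ y * φ z)
    (hstar : ∀ x : A, φ (star x) = star (φ x)) (a : A) :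
    spectrum ℂ (star (φ a) * φ a) ⊆ spectrum ℂ (star a * a) ∪ {0} := by
  intro lam hlam
  by_contra hmem
  have hns : lam ∉ spectrum ℂ (star a * a) := fun h => hmem (Or.inl h)
  have hn0 : lam ≠ 0 := fun h => hmem (Or.inr h)
  set e : B := φ 1 with he
  set s : A := star a * a with hs
  -- basic identities
  have he2 : ∀ x : A, φ x * (e * e) = φ x := by
    intro x
    have := h3 x 1 1
    rw [mul_one, mul_one] at this
    rw [← mul_assoc, ← this]
  have he2' : ∀ x : A, (e * e) * φ x = φ x := by
    intro x
    have := h3 1 1 x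
    rw [one_mul, one_mul] at this
    exact this.symm
  -- b = φ s * e
  have hb : star (φ a) * φ a = φ s * e := by
    have h1 : φ a = e * φ a * e := by
      have := h3 1 a 1
      rwa [one_mul, mul_one] at this
    calc star (φ a) * φ a = φ (star a) * φ a := by rw [hstar]
      _ = φ (star a) * (e * φ a * e) := by rw [← h1]
      _ = (φ (star a) * e * φ a) * e := by noncomm_ring
      _ = φ (star a * 1 * a) * e := by rw [h3]
      _ = φ s * e := by rw [mul_one]
  rw [hb] at hlam
  -- lam ∉ σ s gives a two-sided inverse c
  rw [spectrum.mem_iff, not_not] at hns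
  set c : A := ↑hns.unit⁻¹ with hc
  have hc1 : (algebraMap ℂ A lam - s) * c = 1 := hns.mul_val_inv
  have hc2 : c * (algebraMap ℂ A lam - s) = 1 := hns.val_inv_mul
  -- apply φ
  have key1 : lam • φ c - φ (s * c) = e := by
    have : φ ((algebraMap ℂ A lam - s) * c) = e := by rw [hc1]
    rwa [sub_mul, Algebra.algebraMap_eq_smul_one, smul_mul_assoc, one_mul,
      map_sub, map_smul] at this
  have key2 : lam • φ c - φ (c * s) = e := by
    have : φ (c * (algebraMap ℂ A lam - s)) = e := by rw [hc2]
    rwa [mul_sub, Algebra.algebraMap_eq_smul_one, mul_smul_comm, mul_one,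
      map_sub, map_smul] at this
  -- structural products
  have hsc : φ s * e * φ c = φ (s * c) := by
    have := h3 s 1 c; rw [mul_one] at this; rw [this]
  have hcs : φ c * e * φ s = φ (c * s) := by
    have := h3 c 1 s; rw [mul_one] at this; rw [this]
  -- the explicit inverse
  set v : B := φ c * e + lam⁻¹ • (1 - e * e) with hv
  have hA : (algebraMap ℂ B lam - φ s * e) * v = 1 := by
    have expand : (algebraMap ℂ B lam - φ s * e) * v =
        lam • (φ c * e) + (lam * lam⁻¹) • (1 - e * e)
          - (φ s * e * φ c) * e - lam⁻¹ • (φ s * e * (1 - e * e)) := by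
      rw [hv, Algebra.algebraMap_eq_smul_one]
      simp only [sub_mul, mul_add, smul_mul_assoc, one_mul, mul_smul_comm, smul_smul]
      simp only [smul_sub, smul_smul, mul_assoc]
      module
    rw [expand, hsc, mul_inv_cancel₀ hn0]
    have h0 : φ s * e * (1 - e * e) = 0 := by
      have : φ s * e * (e * e) = φ s * e := by
        rw [mul_assoc (φ s) e (e * e), show e * (e * e) = (e * e) * e by noncomm_ring,
          ← mul_assoc, he2]
      rw [mul_sub, mul_one, this, sub_self]
    rw [h0, smul_zero, sub_zero, one_smul]
    calc lam • (φ c * e) + (1 - e * e) - φ (s * c) * e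
        = (lam • φ c - φ (s * c)) * e + (1 - e * e) := by
          simp only [sub_mul, smul_mul_assoc]; module
      _ = e * e + (1 - e * e) := by rw [key1]
      _ = 1 := by noncomm_ring
  have hB : v * (algebraMap ℂ B lam - φ s * e) = 1 := by
    have expand : v * (algebraMap ℂ B lam - φ s * e) =
        lam • (φ c * e) + (lam * lam⁻¹) • (1 - e * e)
          - (φ c * e * φ s) * e - lam⁻¹ • ((1 - e * e) * (φ s * e)) := by
      rw [hv, Algebra.algebraMap_eq_smul_one]
      simp only [add_mul, mul_sub, mul_one, smul_mul_assoc, mul_smul_comm, smul_smul]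
      simp only [smul_sub, smul_smul, mul_assoc]
      module
    have hassoc : φ c * e * (φ s * e) = (φ c * e * φ s) * e := by noncomm_ring
    rw [expand, hcs, mul_inv_cancel₀ hn0]
    have h0 : (1 - e * e) * (φ s * e) = 0 := by
      rw [sub_mul, one_mul, ← mul_assoc, he2', sub_self]
    rw [h0, smul_zero, sub_zero, one_smul]
    calc lam • (φ c * e) + (1 - e * e) - φ (c * s) * e
        = (lam • φ c - φ (c * s)) * e + (1 - e * e) := by
          simp only [sub_mul, smul_mul_assoc]; module
      _ = e * e + (1 - e * e) := by rw [key2]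
      _ = 1 := by noncomm_ring
  exact (spectrum.mem_iff.mp hlam) ⟨⟨_, v, hA, hB⟩, rfl⟩
end

section
/- Let φ : A → B be a star-preserving 3-homomorphism between unital C*-algebras. Then φ is norm-decreasing: ‖φ(a)‖ ≤ ‖a‖ for all a ∈ A. In particular φ is continuous with ‖φ‖ ≤ 1. -/
/-- Every star-preserving 3-homomorphism between unital C*-algebras is
norm-decreasing. -/
theorem stmt5 {A B : Type*} [CStarAlgebra A] [CStarAlgebra B]
    (φ : A →ₗ[ℂ] B)
    (h3 : ∀ x y z : A, φ (x * y * z) = φ x * φ y * φ z)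
    (hstar : ∀ x : A, φ (star x) = star (φ x)) :
    ∀ a : A, ‖φ a‖ ≤ ‖a‖ := by
  set e : B := φ 1 with he
  have hestar : star e = e := by rw [he, ← hstar, star_one]
  have hmid : ∀ x : A, e * φ x * e = φ x := fun x => by
    rw [← h3 1 x 1, one_mul, mul_one]
  have hleft : ∀ x : A, e * e * φ x = φ x := fun x => by
    rw [← h3 1 1 x, one_mul, one_mul]
  have hcomm : ∀ x : A, e * φ x = φ x * e := fun x => by
    have h1 : e * (e * φ x * e) = φ x * e := by
      rw [← mul_assoc, ← mul_assoc, hleft]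
    rw [← h1, hmid]
  have hmul : ∀ x y : A, φ (x * y) = e * φ x * φ y := fun x y => by
    rw [← h3 1 x y, one_mul]
  let ψ : A →⋆ₙₐ[ℂ] B :=
    { toFun := fun x => e * φ x
      map_add' := fun x y => by simp [mul_add]
      map_smul' := fun c x => by simp [mul_smul_comm]
      map_mul' := fun x y => by
        show e * φ (x * y) = (e * φ x) * (e * φ y)
        calc e * φ (x * y) = e * (e * φ x * φ y) := by rw [hmul]
          _ = e * e * φ x * φ y := by rw [← mul_assoc, ← mul_assoc]
          _ = φ x * φ y := by rw [hleft]
          _ = (e * φ x * e) * φ y := by rw [hmid]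
          _ = (e * φ x) * (e * φ y) := by rw [mul_assoc]
      map_zero' := by simp
      map_star' := fun x => by
        show e * φ (star x) = star (e * φ x)
        rw [star_mul, hestar, hcomm, hstar] }
  intro a
  have hψle : ‖ψ (star a * a)‖ ≤ ‖star a * a‖ :=
    NonUnitalStarAlgHom.norm_apply_le ψ (star a * a)
  have key : ψ (star a * a) = star (φ a) * φ a := by
    show e * φ (star a * a) = star (φ a) * φ a
    calc e * φ (star a * a) = e * (e * φ (star a) * φ a) := by rw [hmul]
      _ = e * e * φ (star a) * φ a := by rw [← mul_assoc, ← mul_assoc]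
      _ = φ (star a) * φ a := by rw [hleft]
      _ = star (φ a) * φ a := by rw [hstar]
  have h1 : ‖φ a‖ ^ 2 ≤ ‖a‖ ^ 2 := by
    rw [pow_two, pow_two, ← CStarRing.norm_star_mul_self (x := φ a),
      ← CStarRing.norm_star_mul_self (x := a), ← key]
    exact hψle
  nlinarith [norm_nonneg (φ a), norm_nonneg a]
end

section
/- Let φ : A → B be a continuous 3-homomorphism between Banach algebras. Then for all a ∈ A, ξ ∈ B*, and F ∈ A**, φ*(φ(a)·ξ·φ**(F)) = a·φ*(ξ)·F, where the actions of A** on A* are given by ⟨F·ξ, x⟩ = ⟨F, ξ·x⟩ and ⟨ξ·F, x⟩ = ⟨F, x·ξ⟩. -/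
open ContinuousLinearMap

variable {A : Type*} [NonUnitalNormedRing A] [NormedSpace ℂ A]
  [SMulCommClass ℂ A A] [IsScalarTower ℂ A A] [CompleteSpace A]

/-- The left module action of `A` on its dual: `⟨a·ξ, x⟩ = ⟨ξ, x * a⟩`. -/
noncomputable def dualLAct (a : A) (ξ : A →L[ℂ] ℂ) : A →L[ℂ] ℂ :=
  ξ.comp ((ContinuousLinearMap.mul ℂ A).flip a)

/-- `x ↦ x·ξ` (i.e. `y ↦ ξ (y * x)`) as a continuous linear map `A →L A*`. -/
noncomputable def dualLActCLM (ξ : A →L[ℂ] ℂ) : A →L[ℂ] (A →L[ℂ] ℂ) :=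
  (ContinuousLinearMap.compSL A A ℂ (RingHom.id ℂ) (RingHom.id ℂ) ξ).comp
    (ContinuousLinearMap.mul ℂ A).flip

/-- The right action of the bidual on the dual: `⟨ξ·F, x⟩ = ⟨F, x·ξ⟩`. -/
noncomputable def bidualRAct (ξ : A →L[ℂ] ℂ) (F : (A →L[ℂ] ℂ) →L[ℂ] ℂ) : A →L[ℂ] ℂ :=
  F.comp (dualLActCLM ξ)

/-- The adjoint (dual map) of a continuous linear map, as a continuous linear map
between duals. -/
noncomputable def adjCLM {A B : Type*} [NonUnitalNormedRing A] [NormedSpace ℂ A]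
    [NonUnitalNormedRing B] [NormedSpace ℂ B] (φ : A →L[ℂ] B) :
    (B →L[ℂ] ℂ) →L[ℂ] (A →L[ℂ] ℂ) :=
  (ContinuousLinearMap.compSL A B ℂ (RingHom.id ℂ) (RingHom.id ℂ)).flip φ

/-- The second adjoint `φ** : A** → B**`. -/
noncomputable def bidualMap {A B : Type*} [NonUnitalNormedRing A] [NormedSpace ℂ A]
    [NonUnitalNormedRing B] [NormedSpace ℂ B] (φ : A →L[ℂ] B)
    (F : (A →L[ℂ] ℂ) →L[ℂ] ℂ) : (B →L[ℂ] ℂ) →L[ℂ] ℂ :=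
  F.comp (adjCLM φ)

/-- For a continuous 3-homomorphism `φ` between Banach algebras,
`φ*(φ(a)·ξ·φ**(F)) = a·φ*(ξ)·F`. -/
theorem stmt10 {B : Type*} [NonUnitalNormedRing B] [NormedSpace ℂ B]
    [SMulCommClass ℂ B B] [IsScalarTower ℂ B B] [CompleteSpace B]
    (φ : A →L[ℂ] B)
    (h3 : ∀ x y z : A, φ (x * y * z) = φ x * φ y * φ z)
    (a : A) (ξ : B →L[ℂ] ℂ) (F : (A →L[ℂ] ℂ) →L[ℂ] ℂ) :
    adjCLM φ (bidualRAct (dualLAct (φ a) ξ) (bidualMap φ F)) =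
      bidualRAct (dualLAct a (adjCLM φ ξ)) F := by
  ext x
  show F _ = F _
  congr 1
  ext z
  simp [adjCLM, bidualRAct, bidualMap, dualLAct, dualLActCLM, ← h3]
end

section
/- Let φ : A → B be a 3-homomorphism between unital algebras where A has unit E. Then φ(E)φ(F) = φ(F)φ(E) for all F ∈ A, i.e., φ(E) commutes with the range of φ. -/
/-- If `φ : A → B` is a 3-homomorphism and `A` is unital, then `φ 1`
commutes with everything in the range of `φ`. -/
theorem stmt13 {A B : Type*} [Ring A] [Algebra ℂ A]
    [NonUnitalRing B] [Module ℂ B]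
    (φ : A →ₗ[ℂ] B)
    (h3 : ∀ x y z : A, φ (x * y * z) = φ x * φ y * φ z) :
    ∀ F : A, φ 1 * φ F = φ F * φ 1 := by
  intro F
  calc φ 1 * φ F = φ 1 * φ (F * 1 * 1) := by rw [mul_one, mul_one]
    _ = φ 1 * (φ F * φ 1 * φ 1) := by rw [h3]
    _ = (φ 1 * φ F * φ 1) * φ 1 := by noncomm_ring
    _ = φ (1 * F * 1) * φ 1 := by rw [h3]
    _ = φ F * φ 1 := by rw [one_mul, mul_one]
end

section
/- Let φ : A → B be a star-preserving 3-homomorphism between unital star-algebras, where A has unit E. Then ψ(F) := φ(E)φ(F) defines a star-preserving homomorphism, i.e., ψ(FG) = ψ(F)ψ(G) and ψ(F*) = ψ(F)* for all F, G ∈ A. -/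
/-- If `φ : A → B` is a star-preserving 3-homomorphism between
*-algebras with `A` unital, then `ψ(F) = φ(1) * φ(F)` is a star-preserving
homomorphism. -/
theorem stmt14 {A B : Type*} [Ring A] [StarRing A] [Algebra ℂ A]
    [NonUnitalRing B] [StarRing B] [Module ℂ B]
    (φ : A →ₗ[ℂ] B)
    (h3 : ∀ x y z : A, φ (x * y * z) = φ x * φ y * φ z)
    (hstar : ∀ x : A, φ (star x) = star (φ x)) :
    (∀ F G : A, φ 1 * φ (F * G) = (φ 1 * φ F) * (φ 1 * φ G)) ∧
      (∀ F : A, φ 1 * φ (star F) = star (φ 1 * φ F)) := by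
  set e := φ 1 with he_def
  have he : e * e * e = e := by
    have := h3 1 1 1; simpa using this.symm
  have hx : ∀ x : A, φ x = e * φ x * e := by
    intro x
    have := h3 1 x 1
    simpa using this
  have hstar1 : star e = e := by
    have := hstar 1
    simpa using this.symm
  have hcomm : ∀ x : A, e * φ x = φ x * e := by
    intro x
    calc e * φ x = e * (e * φ x * e) := by rw [← hx]
      _ = e * e * φ x * e := by noncomm_ring
      _ = e * e * (e * φ x * e) * e := by rw [← hx x]
      _ = (e * e * e) * φ x * (e * e) := by noncomm_ring
      _ = e * φ x * (e * e) := by rw [he]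
      _ = (e * φ x * e) * e := by noncomm_ring
      _ = φ x * e := by rw [← hx]
  constructor
  · intro F G
    have h := h3 F 1 G
    rw [mul_one] at h
    rw [h]
    noncomm_ring
  · intro F
    rw [hstar F, star_mul, hstar1, ← hstar F, hcomm]
end
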